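/- For every integer l ≥ 3 and every z ∈ (0,1), H(0,z) < 0. -/

import Mathlib

/-!
Put `t = 1 - z`, `w = z^(l-1)`, `s = 1 - w` and `c = 3 z^l / l`. Multiplying by `s³`,
`H(0,z)` becomes the cubic `B³ + 6ts³B + 8t²s⁸ - ts` in `B = s·(c - t(1 - 4w))`, which is
increasing in `B`. Since `l ≥ 3` we have `c ≤ zw`, and Bernoulli's inequality
`1 - w ≤ (l-1)(1-z)` gives `cs ≤ 3wt`; each bound caps `B` by a polynomial in `z` and `w`.
On the region `0 < w ≤ z²`, the cubic at the first cap is negative where `z(1-w) ≤ 3(1-z)`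
and at the second cap elsewhere. Both facts are proved by explicit certificates; no cruder
estimate can work, because `H(0,z) ≈ -z²` near `z = 0`.
-/

open Real

/-- `H(u,z)` for the `(l,3,3)` MN codes. -/
noncomputable def Hfun (l : ℕ) (u z : ℝ) : ℝ :=
  (u + 3 * z^l / (l:ℝ) - (1-z) * (1 - 4 * z^(l-1)))^3
    + 6 * (1-z) * (1 - z^(l-1)) * (u + 3 * z^l / (l:ℝ) - (1-z) * (1 - 4 * z^(l-1)))
    - (1-z) * (1 - z^(l-1)) ^ (-2 : ℤ)
    + 8 * (1-z)^2 * (1 - z^(l-1))^5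

noncomputable def clearedH (t s B : ℝ) : ℝ :=
  B^3 + 6*t*s^3*B + 8*t^2*s^8 - t*s

theorem clearedH_monotone {t s : ℝ} (h : 0 ≤ t * s^3) : Monotone (clearedH t s) := by
  intro B B' hB
  have hsq : 0 ≤ B'^2 + B'*B + B^2 + 6*t*s^3 := by
    nlinarith [sq_nonneg (B + B'), sq_nonneg B, sq_nonneg B']
  unfold clearedH
  nlinarith [mul_nonneg (sub_nonneg.2 hB) hsq]

theorem Hfun_eq_clearedH (l : ℕ) (u z : ℝ) (hw : z^(l-1) ≠ 1) :
    Hfun l u z = clearedH (1-z) (1-z^(l-1))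
      ((1-z^(l-1)) * (u + 3*z^l/l - (1-z)*(1-4*z^(l-1)))) / (1-z^(l-1))^3 := by
  have hs : 1 - z^(l-1) ≠ 0 := sub_ne_zero.2 hw.symm
  rw [Hfun, clearedH, zpow_neg, zpow_ofNat]
  generalize 3 * z^l / (l:ℝ) = c
  generalize z^(l-1) = w at hs ⊢
  field_simp
  ring

/- The certificates: `-clearedH` is a combination, with positive rational coefficients, of
products of the nonnegative quantities `z`, `w`, `1-z`, `1-w`, `z²-w` and `±(3-4z+zw)`. -/

set_option maxHeartbeats 1000000 in
theorem clearedH_neg_of_le {z w : ℝ} (hz0 : 0 < z) (hz1 : z < 1) (hw0 : 0 < w)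
    (hwz : w ≤ z^2) (h : z*(1-w) ≤ 3*(1-z)) :
    clearedH (1-z) (1-w) ((1-w)*(z*w+4*(1-z)*w-(1-z))) < 0 := by
  have : 0 < 1 - z := by linarith
  have : 0 < 1 - w := by nlinarith
  have : 0 ≤ z^2 - w := by linarith
  have : 0 ≤ 3 - 4*z + z*w := by linarith
  have hcert : -clearedH (1-z) (1-w) ((1-w)*(z*w+4*(1-z)*w-(1-z))) = (1-w) * (
      (2187382947261163155715597533715/38948498728973521011282141904896)*((1-w)^4*w)
      + (170637668609639957471750778353/1043263358811790741373628801024)*((1-w)^8*w)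
      + (20930740255693173649066239055633/116845496186920563033846425714688)*((1-w)^11*w)
      + (3022611210256914247484239/67082263298083252403139712)*((1-w)^6*(z^2-w)^2)
      + (39184996108669275161974935439/618230138555135254147335585792)*((1-z)*(1-w)^8*w^3)
      + (33564098957653513771432565081/309115069277567627073667792896)*((1-z)^2*(1-w)^7*w^3)
      + (2448877620227751445250411857/4829922957461994173026059264)*((1-z)^6*(1-w)^3*w^3)
      + (8962086005048370322893103/67082263298083252403139712)*((1-z)^7*(1-w)^2*w^3)
      + (39184996108669275161974935439/618230138555135254147335585792)*((1-w)^8*(3-4*z+z*w)*w^2)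
      + (256674079638695673026581/2096320728065101637598116)*((1-z)^8*(3-4*z+z*w)*w^2)
      + (2810448575507880695271185179/77278767319391906768416948224)*((1-w)^7*(3-4*z+z*w)*(z^2-w)*w)
      + (6542393040683620353470529353/463672603916351440610501689344)*((1-z)*(1-w)^6*(3-4*z+z*w)^2*w)
      + (382193051767481748600106837/679207915893092930581789584)*((1-w)^6*(z^2-w)^3)
      + (83202967126309252679390/1572240546048826228198587)*((1-w)*(3-4*z+z*w)^2*(z^2-w))
      + (4997542226481549311462041/301870184841374635814128704)*((1-w)^4*z^4)
      + (2744310048497138092813141/18866886552585914738383044)*((1-w)^3*(3-4*z+z*w)*w*z^2)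
      + (36438605358604698653028565/75467546210343658953532176)*((1-w)^3*(3-4*z+z*w)*(z^2-w)*z^2)
      + (189286803954355245245053343717/2782035623498108643663010136064)*((1-z)^2*(1-w)^6*w^3*z)
      + (770022238916087019079743/4192641456130203275196232)*((1-z)^8*w^3*z)
      + (30026303245233540246091756555/43469306617157947557234533376)*((1-z)^2*(1-w)^5*(z^2-w)*w^2*z)
      + (534213544765034157807752989813/1391017811749054321831505068032)*((1-z)^2*(1-w)^4*(3-4*z+z*w)^2*w*z)
      + (26750217087559353862902035/113201319315515488430298264)*((1-z)^4*(1-w)^2*(3-4*z+z*w)^2*w*z)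
      + (8710505759368524922397513/100623394947124878604709568)*((1-z)^6*(3-4*z+z*w)^2*w*z)
      + (1788371238818284520203745/4716721638146478684595761)*((1-z)^3*(1-w)*(3-4*z+z*w)^2*(z^2-w)*z)
      + (1/3)*((1-w)*w^4)
      + (13809408651417683969266413405677/38948498728973521011282141904896)*((1-w)^4*w^4)
      + (18184741569221303077889795194349/12982832909657840337094047301632)*((1-w)^5*w^4)
      + (34369603046509166634798590117831/19474249364486760505641070952448)*((1-w)^6*w^4)
      + (11699697505269668992135329994145/19474249364486760505641070952448)*((1-w)^7*w^4)
      + (20930740255693173649066239055633/116845496186920563033846425714688)*((1-w)^8*w^4)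
      + (2/3)*((1-z)*(1-w)*w^4)
      + (161143956030832142783344065961/927345207832702881221003378688)*((1-z)^4*(1-w)^4*w^4)
      + (18824369053575397473043371/134164526596166504806279424)*((1-z)^8*w^4)
      + (21611196601083052831196185/12577924368390609825588696)*((1-w)^3*(z^2-w)*w^3)
      + (962121882765763529111085407/1358415831786185861163579168)*((1-w)^6*(z^2-w)*w^3)
      + (24975565360395686780551521463/231836301958175720305250844672)*((1-z)^2*(1-w)^5*(z^2-w)*w^3)
      + (1/3)*((3-4*z+z*w)*w^3) + (2/3)*((1-w)*(3-4*z+z*w)*w^3)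
      + (2224824503745615406364361463/1358415831786185861163579168)*((1-w)^5*(3-4*z+z*w)*w^3)
      + (5920759050660430445794602773/103038356425855875691222597632)*((1-z)^4*(1-w)^3*(3-4*z+z*w)*w^3)
      + (3926521707634182588023819/134164526596166504806279424)*((1-z)^7*(3-4*z+z*w)*w^3)
      + (1515919306701711223943825143/603740369682749271628257408)*((1-w)^4*(z^2-w)^2*w^2)
      + (3102879608534497830057479/1572240546048826228198587)*((1-w)^2*(3-4*z+z*w)*(z^2-w)*w^2)
      + (11413995160263711682057695391/16300989981434230333962950016)*((1-w)^5*(3-4*z+z*w)*(z^2-w)*w^2)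
      + (2716476486654858758592076243165/8346106870494325930989030408192)*((1-z)*(1-w)^5*(3-4*z+z*w)*(z^2-w)*w^2)
      + (250326134442133350576273592601/695508905874527160915752534016)*((1-z)^2*(1-w)^4*(3-4*z+z*w)*(z^2-w)*w^2)
      + (33564098957653513771432565081/309115069277567627073667792896)*((1-w)^6*(3-4*z+z*w)^2*w^2)
      + (247053820815294468932072347/226402638631030976860596528)*((1-z)*(1-w)^3*(3-4*z+z*w)^2*w^2)
      + (640631033890770649733946026305/927345207832702881221003378688)*((1-z)^3*(1-w)^3*(3-4*z+z*w)^2*w^2)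
      + (70548402033591723507429565/402493579788499514418838272)*((1-z)^5*(1-w)*(3-4*z+z*w)^2*w^2)
      + (6345199831778007337209603/4192641456130203275196232)*((1-w)^2*(z^2-w)^3*w)
      + (513348159277391346053162/1572240546048826228198587)*((1-z)^3*(1-w)^2*(z^2-w)^3*w)
      + (41601483563154626339695/524080182016275409399529)*((1-w)*(3-4*z+z*w)*(z^2-w)^2*w)
      + (2381686361499144357420553001/1811221109048247814884772224)*((1-z)*(1-w)^3*(3-4*z+z*w)*(z^2-w)^2*w)
      + (59145780811800620625104/4716721638146478684595761)*((1-w)^2*(3-4*z+z*w)^2*(z^2-w)*w)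
      + (1815330133350258219571221917/2037623747679278791745368752)*((1-w)^4*(3-4*z+z*w)^2*(z^2-w)*w)
      + (1633825868979051659771159032073/4173053435247162965494515204096)*((1-w)^5*(3-4*z+z*w)^2*(z^2-w)*w)
      + (318346804484689244889351955759/463672603916351440610501689344)*((1-z)*(1-w)^4*(3-4*z+z*w)^2*(z^2-w)*w)
      + (2420456731069068903153130855/43469306617157947557234533376)*((1-z)^2*(1-w)^3*(3-4*z+z*w)^2*(z^2-w)*w)
      + (2669094026129578383063459691/3622442218096495629769544448)*((1-z)^3*(1-w)^2*(3-4*z+z*w)^2*(z^2-w)*w)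
      + (12097958719293731320924973/37733773105171829476766088)*((1-z)^4*(1-w)*(3-4*z+z*w)^2*(z^2-w)*w)
      + (2219037707419653179394955/33541131649041626201569856)*((1-z)^5*(3-4*z+z*w)^2*(z^2-w)*w)
      + (48856296991969818094467501155/2782035623498108643663010136064)*((1-w)^5*(3-4*z+z*w)^3*w)
      + (988492394155970579314153/4716721638146478684595761)*((1-w)^4*(z^2-w)^4)
      + (20568341498104880548428647/25155848736781219651177392)*((1-w)^2*(3-4*z+z*w)*(z^2-w)^3)
      + (1452096512779041980475293/2096320728065101637598116)*((1-z)*(1-w)^2*(3-4*z+z*w)*(z^2-w)^3)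
      + (41601483563154626339695/3144481092097652456397174)*((1-w)*(3-4*z+z*w)^2*(z^2-w)^2)
      + (2175829611109526492080380583/5433663327144743444654316672)*((1-w)^3*(3-4*z+z*w)^2*(z^2-w)^2)
      + (41601483563154626339695/6288962184195304912794348)*((1-z)*(1-w)*(3-4*z+z*w)^2*(z^2-w)^2)
      + (99489966090925284160715509/226402638631030976860596528)*((1-z)*(1-w)^3*(3-4*z+z*w)^2*(z^2-w)^2)
      + (7278289405962601959834065/37733773105171829476766088)*((1-z)^2*(1-w)*(3-4*z+z*w)^2*(z^2-w)^2)
      + (274471280637347651361359/14150164914439436053787283)*((1-z)^2*(1-w)^2*(3-4*z+z*w)^3*(z^2-w))) := by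
    unfold clearedH
    ring
  rw [← neg_pos, hcert]
  positivity

set_option maxHeartbeats 1000000 in
theorem clearedH_neg_of_ge {z w : ℝ} (hz0 : 0 < z) (hz1 : z < 1) (hw0 : 0 < w)
    (hwz : w ≤ z^2) (h : 3*(1-z) ≤ z*(1-w)) :
    clearedH (1-z) (1-w) ((1-z)*(3*w+4*w*(1-w)-(1-w))) < 0 := by
  have : 0 < 1 - z := by linarith
  have : 0 < 1 - w := by nlinarith
  have : 0 ≤ z^2 - w := by linarith
  have : 0 ≤ 4*z - z*w - 3 := by linarith
  have hcert : -clearedH (1-z) (1-w) ((1-z)*(3*w+4*w*(1-w)-(1-w))) =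
      (51986968523095958080749916007/139967808115677764989203109440)*((1-z)*(1-w)^5)
      + (6302244523356221274910979513/139967808115677764989203109440)*((1-z)*(1-w)^10)
      + (266407751609178827301856471/145799800120497671863753239)*((1-z)^3*(1-w)^9)
      + (170415375346010834225707528/437399400361493015591259717)*((1-z)^4*(1-w)^7)
      + (23674484962693979485415680/48599933373499223954584413)*((1-z)^6*(1-w)^5)
      + (20706191880424023821931392/145799800120497671863753239)*((1-z)^6*(1-w)^6)
      + (18942316489683508027392/5399992597055469328287157)*((1-z)^11*(1-w))
      + (10503808665659841134592/5399992597055469328287157)*((1-z)^12)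
      + (30771353166213759425593344/5399992597055469328287157)*((1-z)^5*(1-w)*z)
      + (46891576494400859591344128/5399992597055469328287157)*((1-z)^6*(1-w)*z)
      + (13575423949339647843583144165/27993561623135552997840621888)*((1-z)*(1-w)^10*w)
      + (475009595028060812191237/32399955582332815969722942)*((1-z)*(1-w)*(4*z-z*w-3))
      + (40890556741329468845355541/145799800120497671863753239)*((1-z)*(1-w)^5*(4*z-z*w-3))
      + (27056262898117387968076937/16199977791166407984861471)*((1-z)^2*(4*z-z*w-3))
      + (9283655090366767733070585065/9331187207711850999280207296)*((1-z)*(1-w)^5*w^2)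
      + (8615812281502636818432/5399992597055469328287157)*((1-z)^10*w^2)
      + (1371049397661004289828570489/583199200481990687455012956)*((1-z)*(1-w)^8*(4*z-z*w-3)*w)
      + (457443606068394763896063899/2332796801927962749820051824)*((1-z)*(1-w)^6*(4*z-z*w-3)^2)
      + (30716478113949494304768/5399992597055469328287157)*((1-z)^7*(1-w)*(4*z-z*w-3)^2)
      + (44698641567711065153028915151/4665593603855925499640103648)*((1-z)*(1-w)^7*(4*z-z*w-3)*w^2)
      + (179708396307530063316573605/291599600240995343727506478)*((1-z)^3*(1-w)^5*(4*z-z*w-3)*w^2)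
      + (11464367465628383099904/5399992597055469328287157)*((1-z)^8*(4*z-z*w-3)*w^2)
      + (5109864083252962063781910769/4665593603855925499640103648)*((1-z)*(1-w)^6*(4*z-z*w-3)^2*w)
      + (14327814875951763243466141/518399289317325055515567072)*((1-z)*(1-w)^5*(4*z-z*w-3)^3)
      + (1306483705305081370972578857/13996780811567776498920310944)*((1-z)^2*(1-w)^4*(4*z-z*w-3)^3)
      + (1423823971064751237070848/5399992597055469328287157)*((1-z)^3*(4*z-z*w-3)^3)
      + (317576722773373823136009779/1555197867951975166546701216)*((1-z)^3*(1-w)^3*(4*z-z*w-3)^3)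
      + (16936047705193223860045448/48599933373499223954584413)*((1-z)^4*(1-w)^2*(4*z-z*w-3)^3)
      + (19252110648321111204864/5399992597055469328287157)*((1-z)^6*(4*z-z*w-3)^3)
      + (17853240400063009803328268/16199977791166407984861471)*((1-z)*(1-w)^5*w*z^3)
      + (19970756768034438300131728/48599933373499223954584413)*((1-z)^3*(1-w)^3*(4*z-z*w-3)^2*z^2)
      + (279840835498366186391307/5399992597055469328287157)*((1-z)^6*(1-w)^2*w^3*z)
      + (337799477040247959846912/5399992597055469328287157)*((1-z)^2*(z^2-w)^3*z)
      + (10503808665659841134592/5399992597055469328287157)*((1-z)^5*(z^2-w)^3*z)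
      + (72775830698380212627057907/1555197867951975166546701216)*((1-z)^2*(1-w)^3*(4*z-z*w-3)^3*z)
      + (1/1)*((1-z)*(1-w)*w^4) + (1/1)*((1-z)*(1-w)^2*w^4)
      + (63151149420976437999034097369/69983904057838882494601554720)*((1-z)*(1-w)^5*w^4)
      + (235568643414193927864375133771/69983904057838882494601554720)*((1-z)*(1-w)^6*w^4)
      + (13575423949339647843583144165/27993561623135552997840621888)*((1-z)*(1-w)^7*w^4)
      + (62020937502119559252357/5399992597055469328287157)*((1-z)^8*w^4)
      + (48587422281756992548664157/5399992597055469328287157)*((1-z)*(1-w)^3*(z^2-w)*w^3)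
      + (4563469535194155989165234743/2332796801927962749820051824)*((1-z)*(1-w)^6*(z^2-w)*w^3)
      + (96071944124541361569372/5399992597055469328287157)*((1-z)^6*(1-w)*(z^2-w)*w^3)
      + (96724857151970387096977589/32399955582332815969722942)*((1-z)*(1-w)*(4*z-z*w-3)*w^3)
      + (75099864580264046971988449/10799985194110938656574314)*((1-z)*(1-w)^2*(4*z-z*w-3)*w^3)
      + (4879108998972560027721648/5399992597055469328287157)*((1-z)*(1-w)^3*(4*z-z*w-3)*w^3)
      + (1249268384682334475348161157/172799763105775018505189024)*((1-z)*(1-w)^6*(4*z-z*w-3)*w^3)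
      + (118743537222380283895676302/16199977791166407984861471)*((1-z)^2*(4*z-z*w-3)*w^3)
      + (102581092706440570128575599/5399992597055469328287157)*((1-z)^2*(1-w)*(4*z-z*w-3)*w^3)
      + (5711755102147551568452973183/4665593603855925499640103648)*((1-z)^2*(1-w)^5*(4*z-z*w-3)*w^3)
      + (44172726613329118445847/5399992597055469328287157)*((1-z)^7*(4*z-z*w-3)*w^3)
      + (869116944169144437035528/16199977791166407984861471)*((1-z)^2*(1-w)^4*(z^2-w)^2*w^2)
      + (195465519852615764738460731/97199866746998447909168826)*((1-z)*(1-w)^4*(4*z-z*w-3)*(z^2-w)*w^2)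
      + (2800907148283571043342065/16199977791166407984861471)*((1-z)^3*(1-w)^3*(4*z-z*w-3)*(z^2-w)*w^2)
      + (1039338641448900239347492/5399992597055469328287157)*((1-z)^4*(1-w)^2*(4*z-z*w-3)*(z^2-w)*w^2)
      + (60744186200699967454118549/5399992597055469328287157)*((1-z)*(1-w)^3*(4*z-z*w-3)^2*w^2)
      + (37533275226694217760768/5399992597055469328287157)*((1-z)^2*(4*z-z*w-3)^2*w^2)
      + (3004284674804046882256372949/4665593603855925499640103648)*((1-z)^2*(1-w)^4*(4*z-z*w-3)^2*w^2)
      + (9024279533067476968701527/259199644658662527757783536)*((1-z)^3*(1-w)^3*(4*z-z*w-3)^2*w^2)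
      + (8615812281502636818432/5399992597055469328287157)*((1-z)^4*(1-w)*(z^2-w)^3*w)
      + (14198321598222446885376/5399992597055469328287157)*((1-z)^4*(1-w)*(4*z-z*w-3)^2*(z^2-w)*w)
      + (12511091742231405920256/5399992597055469328287157)*((1-z)*(4*z-z*w-3)^3*w)
      + (3373165237635569225580544/16199977791166407984861471)*((1-z)*(1-w)^2*(4*z-z*w-3)^3*w)
      + (1908857871204861154361344/16199977791166407984861471)*((1-z)^2*(1-w)*(4*z-z*w-3)^3*w)
      + (5566570396856121286656/5399992597055469328287157)*((1-z)^3*(1-w)*(z^2-w)^4)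
      + (86902406752446274682880/5399992597055469328287157)*((1-z)^3*(4*z-z*w-3)*(z^2-w)^3)
      + (24508886886539629314048/5399992597055469328287157)*((1-z)^4*(4*z-z*w-3)*(z^2-w)^3)
      + (586801068110061559332864/5399992597055469328287157)*((1-z)^2*(4*z-z*w-3)^3*(z^2-w))
      + (33362911312617082454016/5399992597055469328287157)*((1-z)*(4*z-z*w-3)^4)
      + (819172610519437614662696399/13996780811567776498920310944)*((1-z)*(1-w)^3*(4*z-z*w-3)^4)
      + (19630003588636466620041679/145799800120497671863753239)*((1-z)^2*(1-w)^2*(4*z-z*w-3)^4)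
      + (244918045230091540578304/5399992597055469328287157)*((1-z)^3*(4*z-z*w-3)^4)
      + (3800771190713592036519385/48599933373499223954584413)*((1-z)^3*(1-w)*(4*z-z*w-3)^4)
      + (4076601607315130756544/5399992597055469328287157)*((1-z)^4*(4*z-z*w-3)^4) := by
    unfold clearedH
    ring
  rw [← neg_pos, hcert]
  positivity

theorem clearedH_neg {z w B : ℝ} (hz0 : 0 < z) (hz1 : z < 1) (hw0 : 0 < w) (hwz : w ≤ z^2)
    (hB₁ : B ≤ (1-w)*(z*w+4*(1-z)*w-(1-z))) (hB₂ : B ≤ (1-z)*(3*w+4*w*(1-w)-(1-w))) :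
    clearedH (1-z) (1-w) B < 0 := by
  have hmono : Monotone (clearedH (1-z) (1-w)) := by
    apply clearedH_monotone
    have : 0 ≤ 1 - w := by nlinarith
    have : 0 ≤ 1 - z := by linarith
    positivity
  rcases le_total (z*(1-w)) (3*(1-z)) with h | h
  · exact (hmono hB₁).trans_lt (clearedH_neg_of_le hz0 hz1 hw0 hwz h)
  · exact (hmono hB₂).trans_lt (clearedH_neg_of_ge hz0 hz1 hw0 hwz h)

theorem one_sub_pow_le_mul_one_sub {z : ℝ} (hz : -1 ≤ z) (n : ℕ) : 1 - z^n ≤ n * (1-z) := by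
  have := one_add_mul_le_pow (a := z - 1) (by linarith) n
  rw [add_sub_cancel] at this
  linarith

theorem three_mul_pow_div_le {l : ℕ} (hl : 3 ≤ l) {z : ℝ} (hz : 0 ≤ z) :
    3 * z^l / l ≤ z * z^(l-1) := by
  rw [← pow_succ', Nat.sub_add_cancel (by omega : 1 ≤ l), div_le_iff₀ (by positivity)]
  have : (3:ℝ) ≤ l := by exact_mod_cast hl
  nlinarith [pow_nonneg hz l]

theorem three_mul_pow_div_mul_le {l : ℕ} (hl : 1 ≤ l) {z : ℝ} (hz0 : 0 ≤ z) (hz1 : z ≤ 1) :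
    3 * z^l / l * (1 - z^(l-1)) ≤ 3 * z^(l-1) * (1-z) := by
  obtain ⟨n, rfl⟩ : ∃ n, l = n + 1 := ⟨l - 1, by omega⟩
  have hbern := one_sub_pow_le_mul_one_sub (by linarith : -1 ≤ z) n
  rw [Nat.add_sub_cancel, pow_succ', div_mul_eq_mul_div, div_le_iff₀ (by positivity)]
  have hzn : 0 ≤ z^n * (1-z) := mul_nonneg (pow_nonneg hz0 n) (by linarith)
  calc 3 * (z * z^n) * (1 - z^n) ≤ 3 * (z * z^n) * (n * (1-z)) := by gcongr
    _ ≤ 3 * z^n * (1-z) * ((n + 1 : ℕ) : ℝ) := by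
      push_cast
      nlinarith [mul_nonneg hzn (mul_nonneg (sub_nonneg.2 hz1) n.cast_nonneg)]

/-- `H(0,z) < 0` for every `l ≥ 3` and `z ∈ (0,1)`. -/
theorem stmt9 (l : ℕ) (hl : 3 ≤ l) (z : ℝ) (hz : z ∈ Set.Ioo (0:ℝ) 1) :
    Hfun l 0 z < 0 := by
  obtain ⟨hz0, hz1⟩ := hz
  have hwz : z^(l-1) ≤ z^2 := pow_le_pow_of_le_one hz0.le hz1.le (by omega)
  have hw1 : z^(l-1) < 1 := pow_lt_one₀ hz0.le hz1 (by omega)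
  have hc₁ := three_mul_pow_div_le hl hz0.le
  have hc₂ := three_mul_pow_div_mul_le (by omega : 1 ≤ l) hz0.le hz1.le
  rw [Hfun_eq_clearedH l 0 z hw1.ne]
  refine div_neg_of_neg_of_pos (clearedH_neg hz0 hz1 (pow_pos hz0 _) hwz ?_ ?_)
    (pow_pos (sub_pos.2 hw1) 3)
  · exact mul_le_mul_of_nonneg_left (by linarith) (sub_pos.2 hw1).le
  · linear_combination hc₂
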